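/- Define D(y,z) = ψ(z)[(ρ+κ)(c − R̃(z,y))Q₁(z) + Q₀'(z)] and N(y,z) = Q₀(z)[((ρ+2κ)/ρ)ψ'(z) + (ρ+κ)(c − R̃(z,y))ψ''(z) + ψ'(z)], where Q_k(z) = ψ^{(k)}ψ^{(k+2)} − (ψ^{(k+1)})² and R̃(z,y) = (μκ + ρz − β(ρ+2κ)y)/(ρ(ρ+κ)). Then for any (y,z) ∈ ℝ², D(y,z) ≥ 0 implies N(y,z) > D(y,z). -/

import Mathlib

open Set

/-- Parabolic cylinder function `D_α(x)` for `α < 0` (integral representation). -/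
noncomputable def Dcyl (α x : ℝ) : ℝ :=
  Real.exp (-x ^ 2 / 4) / Real.Gamma (-α) *
    ∫ t in Ioi (0 : ℝ), t ^ (-α - 1) * Real.exp (-t ^ 2 / 2 - x * t)

/-- Increasing fundamental solution of `(σ²/2)u'' + κ(μ−x)u' − ρu = 0`. -/
noncomputable def psi (κ μ σ ρ : ℝ) (x : ℝ) : ℝ :=
  Real.exp (κ * (x - μ) ^ 2 / (2 * σ ^ 2)) *
    Dcyl (-(ρ / κ)) (-((x - μ) / σ) * Real.sqrt (2 * κ))

/-- Decreasing fundamental solution of `(σ²/2)u'' + κ(μ−x)u' − ρu = 0`. -/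
noncomputable def phi (κ μ σ ρ : ℝ) (x : ℝ) : ℝ :=
  Real.exp (κ * (x - μ) ^ 2 / (2 * σ ^ 2)) *
    Dcyl (-(ρ / κ)) (((x - μ) / σ) * Real.sqrt (2 * κ))

/-- `R̃(z,y) = (μκ + ρz − β(ρ+2κ)y)/(ρ(ρ+κ))`. -/
noncomputable def Rt (κ μ ρ β : ℝ) (z y : ℝ) : ℝ :=
  (μ * κ + ρ * z - β * (ρ + 2 * κ) * y) / (ρ * (ρ + κ))

/-- `Q_k(z) = ψ^{(k)}(z)ψ^{(k+2)}(z) − (ψ^{(k+1)}(z))²`. -/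
noncomputable def Q (κ μ σ ρ : ℝ) (k : ℕ) (z : ℝ) : ℝ :=
  iteratedDeriv k (psi κ μ σ ρ) z * iteratedDeriv (k + 2) (psi κ μ σ ρ) z
    - (iteratedDeriv (k + 1) (psi κ μ σ ρ) z) ^ 2

/-- `D(y,z) = ψ(z)[(ρ+κ)(c − R̃(z,y))Q₁(z) + Q₀'(z)]`. -/
noncomputable def Dfun (κ μ σ ρ β c : ℝ) (y z : ℝ) : ℝ :=
  psi κ μ σ ρ z *
    ((ρ + κ) * (c - Rt κ μ ρ β z y) * Q κ μ σ ρ 1 z + deriv (Q κ μ σ ρ 0) z)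

/-- `N(y,z) = Q₀(z)[((ρ+2κ)/ρ)ψ'(z) + (ρ+κ)(c − R̃(z,y))ψ''(z) + ψ'(z)]`. -/
noncomputable def Nfun (κ μ σ ρ β c : ℝ) (y z : ℝ) : ℝ :=
  Q κ μ σ ρ 0 z *
    ((ρ + 2 * κ) / ρ * deriv (psi κ μ σ ρ) z +
      ((ρ + κ) * (c - Rt κ μ ρ β z y) * iteratedDeriv 2 (psi κ μ σ ρ) z
        + deriv (psi κ μ σ ρ) z))

/-- `H(x) = ψ'(x)(c − R̃(x, ybar)) + (ρ+κ)⁻¹ψ(x)`. -/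
noncomputable def Hfun (κ μ σ ρ β c ybar : ℝ) (x : ℝ) : ℝ :=
  deriv (psi κ μ σ ρ) x * (c - Rt κ μ ρ β x ybar) + (ρ + κ)⁻¹ * psi κ μ σ ρ x

/-!
Through the integral representation of the parabolic cylinder function,
`ψ⁽ᵏ⁾(z) = mᵏ Mₖ / Γ(ρ/κ)` with `m = √(2κ)/σ`, where `Mₖ` is the `k`-th moment of the positive
measure `t^(ρ/κ-1) e^(-t²/2 + wt) dt` on `(0, ∞)` and `w = m (z - μ)`. So `Qₖ` is, up to a positive
factor, the `2 × 2` Hankel determinant of `(Mₖ, Mₖ₊₁, Mₖ₊₂)`, and `D`, `N` are polynomials in the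
moments. Hankel matrices of moments of a positive measure are positive definite, and integration by
parts gives the recursion `Mₖ₊₂ = w Mₖ₊₁ + (ρ/κ + k) Mₖ`. Writing `D ∝ M₀ E`, the recursion turns
the two `3 × 3` Hankel determinants `H₀, H₁` into the identity
`(ρ/κ) Q₁ (N - D) ∝ (ρ/κ) E H₀ + Q₀ H₁`, whose right side is positive when `E ≥ 0`.
-/

open MeasureTheory Matrix Real Filter Topology Polynomial

noncomputable def cylKernel (c w t : ℝ) : ℝ := t ^ (c - 1) * exp (-t ^ 2 / 2 + w * t)

noncomputable def cylIntegral (c w : ℝ) : ℝ := ∫ t in Ioi 0, cylKernel c w t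

section cylKernel

variable {c w t : ℝ}

lemma cylKernel_pos (ht : 0 < t) : 0 < cylKernel c w t :=
  mul_pos (rpow_pos_of_pos ht _) (exp_pos _)

lemma cylKernel_add_natCast (ht : 0 < t) (k : ℕ) :
    cylKernel (c + k) w t = t ^ k * cylKernel c w t := by
  rw [cylKernel, cylKernel, add_sub_right_comm, rpow_add_natCast ht.ne']
  ring

lemma cylKernel_add_one (ht : 0 < t) : cylKernel (c + 1) w t = t * cylKernel c w t := by
  simpa using cylKernel_add_natCast (c := c) (w := w) ht 1

lemma continuousOn_cylKernel : ContinuousOn (cylKernel c w) (Ioi 0) :=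
  fun _ ht ↦ ((continuousAt_id.rpow_const (Or.inl (ne_of_gt ht))).mul
    (by fun_prop)).continuousWithinAt

lemma integrableOn_cylKernel (hc : 0 < c) (w : ℝ) : IntegrableOn (cylKernel c w) (Ioi 0) := by
  have hdom : IntegrableOn (fun t ↦ exp (w ^ 2) * (t ^ (c - 1) * exp (-(1 / 4) * t ^ 2)))
      (Ioi 0) :=
    (integrableOn_rpow_mul_exp_neg_mul_sq (by norm_num) (by linarith)).const_mul _
  refine hdom.mono' (continuousOn_cylKernel.aestronglyMeasurable measurableSet_Ioi) ?_
  filter_upwards [ae_restrict_mem measurableSet_Ioi] with t ht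
  rw [norm_of_nonneg (cylKernel_pos ht).le, cylKernel, mul_left_comm, ← exp_add]
  refine mul_le_mul_of_nonneg_left (exp_le_exp.mpr ?_) (rpow_nonneg (le_of_lt ht) _)
  nlinarith [sq_nonneg (t / 2 - w)]

lemma integrableOn_pow_mul_cylKernel (hc : 0 < c) (w : ℝ) (k : ℕ) :
    IntegrableOn (fun t ↦ t ^ k * cylKernel c w t) (Ioi 0) :=
  (integrableOn_cylKernel (by positivity : 0 < c + k) w).congr_fun
    (fun _ ht ↦ cylKernel_add_natCast ht k) measurableSet_Ioi

lemma cylIntegral_add_natCast (k : ℕ) :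
    cylIntegral (c + k) w = ∫ t in Ioi 0, t ^ k * cylKernel c w t :=
  setIntegral_congr_fun measurableSet_Ioi fun _ ht ↦ cylKernel_add_natCast ht k

end cylKernel

lemma setIntegral_Ioi_pos_of_pos_off_finite {f : ℝ → ℝ} {S : Set ℝ} (hS : S.Finite)
    (hf : IntegrableOn f (Ioi 0)) (hnonneg : ∀ t ∈ Ioi 0, 0 ≤ f t)
    (hpos : ∀ t ∈ Ioi 0 \ S, 0 < f t) : 0 < ∫ t in Ioi 0, f t := by
  have hf_ae : 0 ≤ᵐ[volume.restrict (Ioi 0)] f :=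
    (ae_restrict_mem measurableSet_Ioi).mono hnonneg
  rw [setIntegral_pos_iff_support_of_nonneg_ae hf_ae hf]
  calc (0 : ENNReal) < volume (Ioi (0 : ℝ) \ S) := by
        rw [measure_sdiff_null (hS.measure_zero volume)]; simp
    _ ≤ volume (Function.support f ∩ Ioi 0) :=
        measure_mono fun t ht ↦ ⟨(hpos t ht).ne', ht.1⟩

section cylIntegral

variable {c : ℝ}

lemma cylIntegral_pos (hc : 0 < c) (w : ℝ) : 0 < cylIntegral c w :=
  setIntegral_Ioi_pos_of_pos_off_finite finite_empty (integrableOn_cylKernel hc w)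
    (fun _ ht ↦ (cylKernel_pos ht).le) fun _ ht ↦ cylKernel_pos ht.1

lemma hasDerivAt_cylKernel_add_one (w : ℝ) {t : ℝ} (ht : 0 < t) :
    HasDerivAt (cylKernel (c + 1) w)
      (c * cylKernel c w t + w * cylKernel (c + 1) w t - cylKernel (c + 2) w t) t := by
  have hpow : HasDerivAt (fun s : ℝ ↦ s ^ c) (c * t ^ (c - 1)) t :=
    hasDerivAt_rpow_const (Or.inl ht.ne')
  have hexp : HasDerivAt (fun s : ℝ ↦ exp (-s ^ 2 / 2 + w * s))
      (exp (-t ^ 2 / 2 + w * t) * (-t + w)) t := by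
    have hin : HasDerivAt (fun s : ℝ ↦ -s ^ 2 / 2 + w * s) (-t + w) t :=
      ((((hasDerivAt_id t).pow 2).neg.div_const 2).add
        ((hasDerivAt_id t).const_mul w)).congr_deriv (by simp only [id, Nat.cast_ofNat]; ring)
    exact hin.exp
  have hK : cylKernel (c + 1) w = fun s ↦ s ^ c * exp (-s ^ 2 / 2 + w * s) := by
    ext s; simp [cylKernel]
  rw [hK]
  refine (hpow.mul hexp).congr_deriv ?_
  rw [show c + 2 = c + 1 + 1 by ring, cylKernel_add_one ht, cylKernel_add_one ht, cylKernel]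
  have hpow_eq : t ^ c = t * t ^ (c - 1) := by
    rw [mul_comm, ← rpow_add_one ht.ne', sub_add_cancel]
  beta_reduce
  rw [hpow_eq]
  ring

lemma cylIntegral_add_two (hc : 0 < c) (w : ℝ) :
    cylIntegral (c + 2) w = w * cylIntegral (c + 1) w + c * cylIntegral c w := by
  have i0 := (integrableOn_cylKernel hc w).const_mul c
  have i1 := (integrableOn_cylKernel (by linarith : 0 < c + 1) w).const_mul w
  have i01 : IntegrableOn (fun t ↦ c * cylKernel c w t + w * cylKernel (c + 1) w t) (Ioi 0) :=
    i0.add i1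
  have i2 := integrableOn_cylKernel (by linarith : 0 < c + 2) w
  have hderiv : ∀ t ∈ Ioi (0 : ℝ), HasDerivAt (cylKernel (c + 1) w)
      (c * cylKernel c w t + w * cylKernel (c + 1) w t - cylKernel (c + 2) w t) t :=
    fun t ht ↦ hasDerivAt_cylKernel_add_one w ht
  have hcont : ContinuousWithinAt (cylKernel (c + 1) w) (Ici 0) 0 := by
    have : ContinuousAt (fun s : ℝ ↦ s ^ (c + 1 - 1)) 0 :=
      continuousAt_rpow_const 0 _ (Or.inr (by linarith))
    exact (this.mul (by fun_prop)).continuousWithinAt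
  have hlim : Tendsto (cylKernel (c + 1) w) atTop (𝓝 0) :=
    tendsto_zero_of_hasDerivAt_of_integrableOn_Ioi hderiv (i01.sub i2)
      (integrableOn_cylKernel (by linarith) w)
  have hFTC := integral_Ioi_of_hasDerivAt_of_tendsto hcont hderiv (i01.sub i2) hlim
  have hzero : cylKernel (c + 1) w 0 = 0 := by
    simp [cylKernel, zero_rpow hc.ne']
  rw [integral_sub i01 i2, integral_add i0 i1, integral_const_mul, integral_const_mul,
    hzero] at hFTC
  simp only [cylIntegral]
  linarith

lemma hasDerivAt_cylIntegral (hc : 0 < c) (w : ℝ) :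
    HasDerivAt (cylIntegral c) (cylIntegral (c + 1) w) w := by
  have hF'_meas : AEStronglyMeasurable (fun t ↦ t * cylKernel c w t)
      (volume.restrict (Ioi 0)) :=
    (continuousOn_id.mul continuousOn_cylKernel).aestronglyMeasurable measurableSet_Ioi
  have hbound_int : IntegrableOn (fun t ↦ t * cylKernel c (w + 1) t) (Ioi 0) := by
    simpa using integrableOn_pow_mul_cylKernel hc (w + 1) 1
  have hbound : ∀ᵐ t ∂volume.restrict (Ioi 0), ∀ x ∈ Metric.ball w 1,
      ‖t * cylKernel c x t‖ ≤ t * cylKernel c (w + 1) t := by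
    filter_upwards [ae_restrict_mem measurableSet_Ioi] with t ht x hx
    have ht' : 0 < t := ht
    have hxw : x ≤ w + 1 := by
      have := (abs_lt.mp (Real.dist_eq x w ▸ Metric.mem_ball.mp hx)).2
      linarith
    rw [norm_of_nonneg (mul_pos ht' (cylKernel_pos ht')).le, cylKernel, cylKernel]
    gcongr
  have hdiff : ∀ᵐ t ∂volume.restrict (Ioi 0), ∀ x ∈ Metric.ball w 1,
      HasDerivAt (fun x ↦ cylKernel c x t) (t * cylKernel c x t) x := by
    refine ae_of_all _ fun t x _ ↦ ?_
    have h := ((hasDerivAt_mul_const (x := x) t).const_add (-t ^ 2 / 2)).exp.const_mul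
      (t ^ (c - 1))
    exact h.congr_deriv (by simp only [cylKernel]; ring)
  have key := hasDerivAt_integral_of_dominated_loc_of_deriv_le
    (F := fun x t ↦ cylKernel c x t) (Metric.ball_mem_nhds w one_pos)
    (Eventually.of_forall fun x ↦ continuousOn_cylKernel.aestronglyMeasurable measurableSet_Ioi)
    (integrableOn_cylKernel hc w) hF'_meas hbound hbound_int hdiff
  have heq : ∫ t in Ioi 0, t * cylKernel c w t = cylIntegral (c + 1) w := by
    simpa using (cylIntegral_add_natCast (c := c) (w := w) 1).symm
  exact heq ▸ key.2

end cylIntegral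

lemma sum_C_mul_X_pow_ne_zero {n : ℕ} {x : Fin n → ℝ} (hx : x ≠ 0) :
    ∑ i, C (x i) * X ^ (i : ℕ) ≠ 0 := by
  obtain ⟨j, hj⟩ := Function.ne_iff.mp hx
  refine ne_of_apply_ne (coeff · j) ?_
  simpa [finsetSum_coeff, coeff_C_mul_X_pow, Fin.val_inj] using hj

lemma sq_sum_mul_pow_mul {n : ℕ} (x : Fin n → ℝ) (k : ℕ) (t u : ℝ) :
    (∑ i, x i * t ^ (i : ℕ)) ^ 2 * (t ^ k * u)
      = ∑ i, ∑ j, x i * x j * (t ^ (k + i + j) * u) := by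
  rw [sq, Finset.sum_mul_sum, Finset.sum_mul]
  refine Finset.sum_congr rfl fun i _ ↦ ?_
  rw [Finset.sum_mul]
  refine Finset.sum_congr rfl fun j _ ↦ ?_
  ring

def hankel (M : ℕ → ℝ) (k n : ℕ) : Matrix (Fin n) (Fin n) ℝ :=
  Matrix.of fun i j ↦ M (k + i + j)

section hankel

variable {M : ℕ → ℝ}

lemma isHermitian_hankel (k n : ℕ) : (hankel M k n).IsHermitian := by
  ext i j
  simp [hankel, add_right_comm]

lemma det_hankel_two (k : ℕ) :
    (hankel M k 2).det = M k * M (k + 2) - M (k + 1) ^ 2 := by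
  simp [det_fin_two, hankel, add_assoc, sq]

lemma det_hankel_three (k : ℕ) :
    (hankel M k 3).det = M k * (M (k + 2) * M (k + 4) - M (k + 3) ^ 2)
      - M (k + 1) * (M (k + 1) * M (k + 4) - M (k + 2) * M (k + 3))
      + M (k + 2) * (M (k + 1) * M (k + 3) - M (k + 2) ^ 2) := by
  rw [det_fin_three]
  simp only [hankel, of_apply, Fin.val_zero, Fin.val_one, Fin.val_two, add_zero, add_assoc,
    Nat.reduceAdd]
  ring

variable {c w : ℝ}

lemma det_hankel_three_zero_eq (hrec : ∀ k : ℕ, M (k + 2) = w * M (k + 1) + (c + k) * M k) :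
    (hankel M 0 3).det = M 2 * (hankel M 0 2).det - M 0 * (hankel M 1 2).det := by
  have h2 : M 2 = w * M 1 + c * M 0 := by simpa using hrec 0
  have h3 : M 3 = w * M 2 + (c + 1) * M 1 := by simpa using hrec 1
  have h4 : M 4 = w * M 3 + (c + 2) * M 2 := by simpa using hrec 2
  simp only [det_hankel_two, det_hankel_three, Nat.reduceAdd, zero_add]
  rw [h4, h3, h2]
  ring

lemma det_hankel_three_one_eq (hrec : ∀ k : ℕ, M (k + 2) = w * M (k + 1) + (c + k) * M k) :
    (hankel M 1 3).det = (2 * c + 2) * M 1 * (hankel M 1 2).det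
      - c * (M 0 * M 3 - M 1 * M 2) * M 2 := by
  have h2 : M 2 = w * M 1 + c * M 0 := by simpa using hrec 0
  have h3 : M 3 = w * M 2 + (c + 1) * M 1 := by simpa using hrec 1
  have h4 : M 4 = w * M 3 + (c + 2) * M 2 := by simpa using hrec 2
  have h5 : M 5 = w * M 4 + (c + 3) * M 3 := by simpa using hrec 3
  simp only [det_hankel_two, det_hankel_three, Nat.reduceAdd]
  rw [h5, h4, h3, h2]
  ring

theorem hankel_bracket_lt (hc : 0 < c) (hM0 : 0 < M 0)
    (hrec : ∀ k : ℕ, M (k + 2) = w * M (k + 1) + (c + k) * M k)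
    (hdet2 : ∀ k, 0 < (hankel M k 2).det) (hdet3 : ∀ k, 0 < (hankel M k 3).det) (α : ℝ)
    (hD : 0 ≤ M 0 * (α * (hankel M 1 2).det + (M 0 * M 3 - M 1 * M 2))) :
    M 0 * (α * (hankel M 1 2).det + (M 0 * M 3 - M 1 * M 2))
      < (hankel M 0 2).det * ((1 + 2 / c) * M 1 + (α * M 2 + M 1)) := by
  set E := α * (hankel M 1 2).det + (M 0 * M 3 - M 1 * M 2)
  have hE : 0 ≤ E := (mul_nonneg_iff_of_pos_left hM0).mp hD
  have key : c * (hankel M 1 2).det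
      * ((hankel M 0 2).det * ((1 + 2 / c) * M 1 + (α * M 2 + M 1)) - M 0 * E)
      = c * E * (hankel M 0 3).det + (hankel M 0 2).det * (hankel M 1 3).det := by
    rw [det_hankel_three_zero_eq hrec, det_hankel_three_one_eq hrec]
    field_simp
    ring
  have hpos : 0 < c * E * (hankel M 0 3).det + (hankel M 0 2).det * (hankel M 1 3).det := by
    have := mul_nonneg (mul_nonneg hc.le hE) (hdet3 0).le
    have := mul_pos (hdet2 0) (hdet3 1)
    linarith
  rw [← key] at hpos
  exact sub_pos.mp ((mul_pos_iff_of_pos_left (mul_pos hc (hdet2 1))).mp hpos)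

end hankel

/-- The `k`-th moment of the measure `cylKernel c w t dt` on `(0, ∞)`. -/
noncomputable def cylMoment (c w : ℝ) (k : ℕ) : ℝ := cylIntegral (c + k) w

section cylMoment

variable {c : ℝ}

lemma cylMoment_pos (hc : 0 < c) (w : ℝ) (k : ℕ) : 0 < cylMoment c w k :=
  cylIntegral_pos (by positivity) w

lemma cylMoment_add_two (hc : 0 < c) (w : ℝ) (k : ℕ) :
    cylMoment c w (k + 2) = w * cylMoment c w (k + 1) + (c + k) * cylMoment c w k := by
  simpa [cylMoment, add_assoc] using cylIntegral_add_two (by positivity : 0 < c + k) w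

lemma hasDerivAt_cylMoment (hc : 0 < c) (w : ℝ) (k : ℕ) :
    HasDerivAt (fun w ↦ cylMoment c w k) (cylMoment c w (k + 1)) w := by
  simpa [cylMoment, add_assoc] using hasDerivAt_cylIntegral (by positivity : 0 < c + k) w

lemma integrableOn_mul_mul_pow_mul_cylKernel (hc : 0 < c) (w : ℝ) (k : ℕ) {n : ℕ}
    (x : Fin n → ℝ) (i j : Fin n) :
    IntegrableOn (fun t ↦ x i * x j * (t ^ (k + i + j) * cylKernel c w t)) (Ioi 0) :=
  (integrableOn_pow_mul_cylKernel hc w _).const_mul _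

lemma integrableOn_sq_sum_mul_pow_mul_cylKernel (hc : 0 < c) (w : ℝ) (k : ℕ) {n : ℕ}
    (x : Fin n → ℝ) :
    IntegrableOn (fun t ↦ (∑ i, x i * t ^ (i : ℕ)) ^ 2 * (t ^ k * cylKernel c w t)) (Ioi 0) := by
  simp_rw [sq_sum_mul_pow_mul]
  exact integrable_finsetSum _ fun i _ ↦ integrable_finsetSum _ fun j _ ↦
    integrableOn_mul_mul_pow_mul_cylKernel hc w k x i j

lemma dotProduct_hankel_cylMoment (hc : 0 < c) (w : ℝ) (k : ℕ) {n : ℕ} (x : Fin n → ℝ) :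
    x ⬝ᵥ (hankel (cylMoment c w) k n *ᵥ x)
      = ∫ t in Ioi 0, (∑ i, x i * t ^ (i : ℕ)) ^ 2 * (t ^ k * cylKernel c w t) := by
  have hterm := integrableOn_mul_mul_pow_mul_cylKernel hc w k x
  simp_rw [sq_sum_mul_pow_mul]
  rw [integral_finsetSum _ fun i _ ↦ integrable_finsetSum _ fun j _ ↦ hterm i j]
  refine Finset.sum_congr rfl fun i _ ↦ ?_
  rw [integral_finsetSum _ fun j _ ↦ hterm i j, mulVec, dotProduct, Finset.mul_sum]
  refine Finset.sum_congr rfl fun j _ ↦ ?_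
  rw [integral_const_mul, hankel, of_apply, cylMoment, cylIntegral_add_natCast]
  ring

theorem posDef_hankel_cylMoment (hc : 0 < c) (w : ℝ) (k n : ℕ) :
    (hankel (cylMoment c w) k n).PosDef := by
  refine posDef_iff_dotProduct_mulVec.mpr ⟨isHermitian_hankel k n, fun x hx ↦ ?_⟩
  set p : ℝ[X] := ∑ i, C (x i) * X ^ (i : ℕ)
  have hp (t : ℝ) : p.eval t = ∑ i, x i * t ^ (i : ℕ) := by simp [p, eval_finsetSum]
  rw [star_trivial, dotProduct_hankel_cylMoment hc w k x]
  refine setIntegral_Ioi_pos_of_pos_off_finite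
    (finite_setOfPred_isRoot (sum_C_mul_X_pow_ne_zero hx)) ?_ ?_ ?_
  · exact integrableOn_sq_sum_mul_pow_mul_cylKernel hc w k x
  · exact fun t ht ↦ mul_nonneg (sq_nonneg _) (mul_nonneg (pow_nonneg (le_of_lt ht) k)
      (cylKernel_pos ht).le)
  · rintro t ⟨ht, hroot⟩
    have hroot : ∑ i, x i * t ^ (i : ℕ) ≠ 0 := hp t ▸ hroot
    exact mul_pos (pow_two_pos_of_ne_zero hroot) (mul_pos (pow_pos ht k) (cylKernel_pos ht))

end cylMoment

lemma Dcyl_neg (c x : ℝ) : Dcyl (-c) x = exp (-x ^ 2 / 4) / Gamma c * cylIntegral c (-x) := by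
  simp only [Dcyl, cylIntegral, cylKernel, neg_neg, neg_mul, sub_eq_add_neg]

section psi

variable {κ σ ρ : ℝ} (μ : ℝ)

lemma psi_eq_cylIntegral (hκ : 0 < κ) (hσ : σ ≠ 0) (x : ℝ) :
    psi κ μ σ ρ x = (Gamma (ρ / κ))⁻¹ * cylIntegral (ρ / κ) (√(2 * κ) / σ * (x - μ)) := by
  have hsq : √(2 * κ) ^ 2 = 2 * κ := sq_sqrt (by positivity)
  have hexp : κ * (x - μ) ^ 2 / (2 * σ ^ 2) + -(-((x - μ) / σ) * √(2 * κ)) ^ 2 / 4 = 0 := by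
    rw [mul_pow, hsq]
    field_simp
    ring
  rw [psi, Dcyl_neg, ← mul_assoc, mul_div_assoc', ← exp_add, hexp, exp_zero, one_div]
  congr 2
  ring

lemma hasDerivAt_const_mul_cylMoment_comp {c : ℝ} (hc : 0 < c) (a m : ℝ) (k : ℕ) (x : ℝ) :
    HasDerivAt (fun x ↦ a * cylMoment c (m * (x - μ)) k)
      (a * m * cylMoment c (m * (x - μ)) (k + 1)) x := by
  have hin : HasDerivAt (fun x ↦ m * (x - μ)) m x := by
    simpa using ((hasDerivAt_id x).sub_const μ).const_mul m
  have h := ((hasDerivAt_cylMoment hc (m * (x - μ)) k).comp x hin).const_mul a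
  exact h.congr_deriv (by ring)

lemma iteratedDeriv_psi (hκ : 0 < κ) (hσ : σ ≠ 0) (hρ : 0 < ρ) (k : ℕ) :
    iteratedDeriv k (psi κ μ σ ρ) = fun x ↦
      (√(2 * κ) / σ) ^ k * (Gamma (ρ / κ))⁻¹ * cylMoment (ρ / κ) (√(2 * κ) / σ * (x - μ)) k := by
  induction k with
  | zero => ext x; simp [psi_eq_cylIntegral μ hκ hσ, cylMoment]
  | succ k ih =>
    ext x
    rw [iteratedDeriv_succ, ih,
      (hasDerivAt_const_mul_cylMoment_comp μ (by positivity) _ _ k x).deriv]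
    ring

lemma hasDerivAt_iteratedDeriv_psi (hκ : 0 < κ) (hσ : σ ≠ 0) (hρ : 0 < ρ) (k : ℕ) (x : ℝ) :
    HasDerivAt (iteratedDeriv k (psi κ μ σ ρ)) (iteratedDeriv (k + 1) (psi κ μ σ ρ) x) x := by
  rw [iteratedDeriv_succ, iteratedDeriv_psi μ hκ hσ hρ k]
  exact (hasDerivAt_const_mul_cylMoment_comp μ (by positivity) _ _ k x).differentiableAt.hasDerivAt

lemma hasDerivAt_Q (hκ : 0 < κ) (hσ : σ ≠ 0) (hρ : 0 < ρ) (k : ℕ) (x : ℝ) :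
    HasDerivAt (Q κ μ σ ρ k)
      (iteratedDeriv k (psi κ μ σ ρ) x * iteratedDeriv (k + 3) (psi κ μ σ ρ) x
        - iteratedDeriv (k + 1) (psi κ μ σ ρ) x * iteratedDeriv (k + 2) (psi κ μ σ ρ) x) x := by
  have hd (j : ℕ) := hasDerivAt_iteratedDeriv_psi μ hκ hσ hρ j x
  refine (((hd k).mul (hd (k + 2))).sub ((hd (k + 1)).pow 2)).congr_deriv ?_
  push_cast
  ring

end psi

theorem stmt12_general (κ σ ρ μ β c : ℝ) (hκ : 0 < κ) (hσ : 0 < σ) (hρ : 0 < ρ) :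
    ∀ y z : ℝ, 0 ≤ Dfun κ μ σ ρ β c y z → Dfun κ μ σ ρ β c y z < Nfun κ μ σ ρ β c y z := by
  intro y z hD
  have hb : 0 < ρ / κ := div_pos hρ hκ
  set m := √(2 * κ) / σ
  set M := cylMoment (ρ / κ) (m * (z - μ))
  set s := m ^ 3 * (Gamma (ρ / κ))⁻¹ ^ 3
  set α := (ρ + κ) * (c - Rt κ μ ρ β z y) * m
  have hψ (k : ℕ) : iteratedDeriv k (psi κ μ σ ρ) z = m ^ k * (Gamma (ρ / κ))⁻¹ * M k :=
    congrFun (iteratedDeriv_psi μ hκ hσ.ne' hρ k) z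
  have hψ0 : psi κ μ σ ρ z = (Gamma (ρ / κ))⁻¹ * M 0 := by simpa using hψ 0
  have hψ1 : deriv (psi κ μ σ ρ) z = m * (Gamma (ρ / κ))⁻¹ * M 1 := by simpa using hψ 1
  have hDs : Dfun κ μ σ ρ β c y z
      = s * (M 0 * (α * (hankel M 1 2).det + (M 0 * M 3 - M 1 * M 2))) := by
    rw [Dfun, (hasDerivAt_Q μ hκ hσ.ne' hρ 0 z).deriv, Q, hψ0]
    simp only [hψ, det_hankel_two, s, α]
    ring
  have hNs : Nfun κ μ σ ρ β c y z
      = s * ((hankel M 0 2).det * ((1 + 2 / (ρ / κ)) * M 1 + (α * M 2 + M 1))) := by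
    rw [Nfun, Q, hψ1, show (ρ + 2 * κ) / ρ = 1 + 2 / (ρ / κ) by field_simp]
    simp only [hψ, det_hankel_two, s, α]
    ring
  have hs : 0 < s := by positivity
  rw [hDs] at hD
  rw [hDs, hNs]
  exact mul_lt_mul_of_pos_left (hankel_bracket_lt hb (cylMoment_pos hb _ 0)
    (cylMoment_add_two hb _) (fun k ↦ (posDef_hankel_cylMoment hb _ k 2).det_pos)
    (fun k ↦ (posDef_hankel_cylMoment hb _ k 3).det_pos) α
    ((mul_nonneg_iff_of_pos_left hs).mp hD)) hs

/-- If `D(y,z) ≥ 0` then `N(y,z) > D(y,z)`. -/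
theorem stmt12 (κ σ ρ μ β c : ℝ) (hκ : 0 < κ) (hσ : 0 < σ) (hρ : 0 < ρ)
    (hβ : 0 < β) (hc : 0 ≤ c) :
    ∀ y z : ℝ, 0 ≤ Dfun κ μ σ ρ β c y z → Dfun κ μ σ ρ β c y z < Nfun κ μ σ ρ β c y z :=
  stmt12_general κ σ ρ μ β c hκ hσ hρ
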